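/- Let r, s ≥ 1 with 1/r + 1/s = 1 and let B ∈ ℝ^{p×K}. For every one-hot label vector y ∈ {e_1, ..., e_K} ⊂ ℝ^K and all x_1, x_2 ∈ ℝ^p, the multiclass logistic regression log-loss satisfies |h_B(x_1, y) − h_B(x_2, y)| ≤ (K^{1/s}·‖B'‖_{1,s} + ‖B‖_{s,1}) · ‖x_1 − x_2‖_r; i.e., for fixed label, x ↦ h_B(x, y) is Lipschitz with respect to the ℓ_r norm with constant K^{1/s}‖B'‖_{1,s} + ‖B‖_{s,1}, the regularization coefficient (per unit of ε) of the MLG-1S relaxation. -/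

import Mathlib

open Real Matrix Finset

/-- The ℓ_r norm of a vector z ∈ ℝ^d: (Σ_i |z_i|^r)^(1/r). -/
noncomputable def lnorm {d : ℕ} (r : ℝ) (z : Fin d → ℝ) : ℝ :=
  (∑ i, |z i| ^ r) ^ (1 / r)

/-- The L_{r,s} matrix norm: the ℓ_s norm of the vector of ℓ_r norms of the columns. -/
noncomputable def Lnorm {m n : ℕ} (r s : ℝ) (A : Matrix (Fin m) (Fin n) ℝ) : ℝ :=
  (∑ j, (∑ i, |A i j| ^ r) ^ (s / r)) ^ (1 / s)


/-- The log-sum-exp function on ℝ^K. -/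
noncomputable def lse {K : ℕ} (u : Fin K → ℝ) : ℝ := Real.log (∑ k, Real.exp (u k))

/-- The multiclass logistic regression log-loss: log(Σ_k e^{(B'x)_k}) − y'B'x. -/
noncomputable def logloss {p K : ℕ} (B : Matrix (Fin p) (Fin K) ℝ)
    (x : Fin p → ℝ) (y : Fin K → ℝ) : ℝ :=
  lse (Bᵀ.mulVec x) - y ⬝ᵥ Bᵀ.mulVec x

/-!
With `u = B'x₁`, `v = B'x₂` and `y = e_i`, the loss difference is
`(lse u - lse v) - (u_i - v_i)`. Log-sum-exp is 1-Lipschitz for the sup norm, and by Hölder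
each coordinate satisfies `|u_k - v_k| ≤ ‖B_{·k}‖_s ‖x₁ - x₂‖_r`. The column norm is bounded by
`‖B'‖_{1,s}` for the log-sum-exp term and by `‖B‖_{s,1}` for the label term, and `K^{1/s} ≥ 1`.
-/

lemma lnorm_nonneg {d : ℕ} (r : ℝ) (z : Fin d → ℝ) : 0 ≤ lnorm r z := by
  unfold lnorm
  positivity

lemma lnorm_le_lnorm {d : ℕ} {r : ℝ} (hr : 0 ≤ r) {a b : Fin d → ℝ}
    (h : ∀ j, |a j| ≤ |b j|) : lnorm r a ≤ lnorm r b := by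
  unfold lnorm
  gcongr (∑ j, ?_ ^ r) ^ _ with j
  exact h j

lemma abs_dotProduct_le_lnorm_mul_lnorm {d : ℕ} {r s : ℝ} (hsr : s.HolderConjugate r)
    (a z : Fin d → ℝ) : |a ⬝ᵥ z| ≤ lnorm s a * lnorm r z := by
  calc |a ⬝ᵥ z| ≤ ∑ j, |a j| * |z j| := by
        simpa only [dotProduct, abs_mul] using abs_sum_le_sum_abs (fun j => a j * z j) univ
    _ ≤ lnorm s a * lnorm r z := by
        simpa only [abs_abs, lnorm] using
          inner_le_Lp_mul_Lq univ (fun j => |a j|) (fun j => |z j|) hsr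

lemma Lnorm_one_left {m n : ℕ} (s : ℝ) (A : Matrix (Fin m) (Fin n) ℝ) :
    Lnorm 1 s A = lnorm s fun j => ∑ i, |A i j| := by
  simp only [Lnorm, lnorm, rpow_one, div_one]
  congr! with j
  exact (abs_of_nonneg (sum_nonneg fun i _ => abs_nonneg _)).symm

lemma Lnorm_one_right {m n : ℕ} (r : ℝ) (A : Matrix (Fin m) (Fin n) ℝ) :
    Lnorm r 1 A = ∑ j, lnorm r fun i => A i j := by
  simp only [Lnorm, lnorm, div_one, rpow_one]

lemma lnorm_col_le_Lnorm_one_left_transpose {p K : ℕ} {s : ℝ} (hs : 0 ≤ s)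
    (B : Matrix (Fin p) (Fin K) ℝ) (k : Fin K) : lnorm s (fun j => B j k) ≤ Lnorm 1 s Bᵀ := by
  rw [Lnorm_one_left]
  refine lnorm_le_lnorm hs fun j => ?_
  exact (single_le_sum (f := fun k => |B j k|) (fun _ _ => abs_nonneg _) (mem_univ k)).trans
    (le_abs_self _)

lemma lnorm_col_le_Lnorm_one_right {p K : ℕ} (s : ℝ) (B : Matrix (Fin p) (Fin K) ℝ) (k : Fin K) :
    lnorm s (fun j => B j k) ≤ Lnorm s 1 B := by
  rw [Lnorm_one_right]
  exact single_le_sum (f := fun k => lnorm s fun j => B j k) (fun _ _ => lnorm_nonneg _ _)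
    (mem_univ k)

lemma lse_le_add {K : ℕ} [NeZero K] {u v : Fin K → ℝ} {c : ℝ} (h : ∀ k, u k ≤ v k + c) :
    lse u ≤ lse v + c := by
  have hsum : ∑ k, exp (u k) ≤ exp c * ∑ k, exp (v k) := by
    rw [mul_sum]
    exact sum_le_sum fun k _ => by rw [← exp_add]; exact exp_le_exp.mpr (by linarith [h k])
  have hpos : 0 < ∑ k, exp (v k) := sum_pos (fun k _ => exp_pos _) univ_nonempty
  calc lse u ≤ log (exp c * ∑ k, exp (v k)) :=
        log_le_log (sum_pos (fun k _ => exp_pos _) univ_nonempty) hsum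
    _ = lse v + c := by rw [log_mul (exp_pos c).ne' hpos.ne', log_exp, lse, add_comm]

lemma abs_lse_sub_le {K : ℕ} [NeZero K] {u v : Fin K → ℝ} {c : ℝ} (h : ∀ k, |u k - v k| ≤ c) :
    |lse u - lse v| ≤ c := by
  have h₁ : lse u ≤ lse v + c := lse_le_add fun k => by linarith [(abs_le.mp (h k)).2]
  have h₂ : lse v ≤ lse u + c := lse_le_add fun k => by linarith [(abs_le.mp (h k)).1]
  exact abs_sub_le_iff.mpr ⟨by linarith, by linarith⟩

lemma abs_mulVec_transpose_sub_le {p K : ℕ} {r s : ℝ} (hsr : s.HolderConjugate r)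
    (B : Matrix (Fin p) (Fin K) ℝ) (x₁ x₂ : Fin p → ℝ) (k : Fin K) :
    |(Bᵀ *ᵥ x₁) k - (Bᵀ *ᵥ x₂) k| ≤ lnorm s (fun j => B j k) * lnorm r (x₁ - x₂) := by
  rw [← Pi.sub_apply, ← mulVec_sub]
  exact abs_dotProduct_le_lnorm_mul_lnorm hsr _ _

/-- For 1/r + 1/s = 1 and a one-hot label y = e_i, the log-loss is
Lipschitz in x w.r.t. the ℓ_r norm with constant K^{1/s}‖B'‖_{1,s} + ‖B‖_{s,1}. -/
theorem mlg_1s_lipschitz {p K : ℕ} (r s : ℝ)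
    (hr : 1 ≤ r) (hs : 1 ≤ s) (hrs : 1 / r + 1 / s = 1)
    (B : Matrix (Fin p) (Fin K) ℝ) (i : Fin K) (x₁ x₂ : Fin p → ℝ) :
    |logloss B x₁ (Pi.single i 1) - logloss B x₂ (Pi.single i 1)| ≤
      ((K : ℝ) ^ (1 / s) * Lnorm 1 s Bᵀ + Lnorm s 1 B) * lnorm r (x₁ - x₂) := by
  have : NeZero K := NeZero.of_pos i.pos
  have hsr : s.HolderConjugate r := by
    simpa only [one_div_one_div] using
      holderConjugate_one_div (by positivity) (by positivity) ((add_comm _ _).trans hrs)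
  set u := Bᵀ *ᵥ x₁
  set v := Bᵀ *ᵥ x₂
  set N := lnorm r (x₁ - x₂)
  have hcoord := abs_mulVec_transpose_sub_le hsr B x₁ x₂
  have hlse : |lse u - lse v| ≤ Lnorm 1 s Bᵀ * N := abs_lse_sub_le fun k => (hcoord k).trans <|
    mul_le_mul_of_nonneg_right (lnorm_col_le_Lnorm_one_left_transpose hsr.nonneg B k)
      (lnorm_nonneg _ _)
  have hlabel : |u i - v i| ≤ Lnorm s 1 B * N := (hcoord i).trans <|
    mul_le_mul_of_nonneg_right (lnorm_col_le_Lnorm_one_right s B i) (lnorm_nonneg _ _)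
  have hK : 1 ≤ (K : ℝ) ^ (1 / s) := one_le_rpow (by exact_mod_cast i.pos) (by positivity)
  calc |logloss B x₁ (Pi.single i 1) - logloss B x₂ (Pi.single i 1)|
      = |(lse u - lse v) - (u i - v i)| := by
        simp only [logloss, single_dotProduct, one_mul, u, v]; ring_nf
    _ ≤ |lse u - lse v| + |u i - v i| := abs_sub _ _
    _ ≤ Lnorm 1 s Bᵀ * N + Lnorm s 1 B * N := add_le_add hlse hlabel
    _ ≤ _ := by
        rw [add_mul, mul_assoc]
        exact add_le_add_left (le_mul_of_one_le_left ((abs_nonneg _).trans hlse) hK) _
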